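/- arXiv:1907.03844 — 5 statements merged into one kernel-verified Lean document; each statement's English description precedes it below -/
import Mathlib

section
/- For every integer n ≥ 3, the automorphism group of the dihedral group D_n is isomorphic to the semidirect product (ℤ/nℤ) ⋊ (ℤ/nℤ)ˣ in which the unit group acts by multiplication; explicitly, the map sending (i, j) ∈ (ℤ/nℤ) ⋊ (ℤ/nℤ)ˣ to the automorphism φ_{i,j} of D_n defined by φ_{i,j}(t^a x^b) = t^a x^{ia + jb} is a group isomorphism (so φ_{i₂,j₂} ∘ φ_{i₁,j₁} = φ_{i₂ + j₂ i₁, j₂ j₁}). -/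
/-- The action of `(ℤ/nℤ)ˣ` on `Multiplicative (ℤ/nℤ)` by multiplication. -/
def unitsMulAction (n : ℕ) : (ZMod n)ˣ →* MulAut (Multiplicative (ZMod n)) where
  toFun u := AddEquiv.toMultiplicative (DistribMulAction.toAddAut (ZMod n)ˣ (ZMod n) u)
  map_one' := by
    ext x
    simp [AddEquiv.toMultiplicative]
  map_mul' := by
    intro u v
    ext x
    simp [AddEquiv.toMultiplicative, mul_smul]

/-! An automorphism `f` of `D_n` is pinned down by `f (r 1)` and `f (sr 0)`. Since `r 1` has
order `n ≠ 2` and every reflection has order `2`, `f (r 1) = r c` is a rotation, whence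
`f (r b) = r (c * b)`; doing the same for `f⁻¹` shows that `c` is a unit, and injectivity forces
`f (sr 0) = sr d` to be a reflection. Thus `f = φ_{d,c}`, and the maps `φ_{i,j}` compose by the
affine law `φ_{i₁,j₁} ∘ φ_{i₂,j₂} = φ_{i₁ + j₁ i₂, j₁ j₂}`, which is the multiplication of the
semidirect product. -/

namespace DihedralGroup

variable {n : ℕ}

def affineHom (i j : ZMod n) : DihedralGroup n →* DihedralGroup n where
  toFun
    | r b => r (j * b)
    | sr b => sr (i + j * b)
  map_one' := congrArg r (mul_zero j)
  map_mul' := by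
    rintro (a | a) (b | b) <;> simp only [r_mul_r, r_mul_sr, sr_mul_r, sr_mul_sr] <;> ring_nf

@[simp] lemma affineHom_r (i j b : ZMod n) : affineHom i j (r b) = r (j * b) := rfl

@[simp] lemma affineHom_sr (i j b : ZMod n) : affineHom i j (sr b) = sr (i + j * b) := rfl

lemma affineHom_comp (i₁ j₁ i₂ j₂ : ZMod n) :
    (affineHom i₁ j₁).comp (affineHom i₂ j₂) = affineHom (i₁ + j₁ * i₂) (j₁ * j₂) := by
  ext (b | b) <;> simp only [MonoidHom.comp_apply, affineHom_r, affineHom_sr] <;> ring_nf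

lemma affineHom_zero_one : affineHom (0 : ZMod n) 1 = MonoidHom.id _ := by
  ext (b | b) <;> simp

def affineAut (i : ZMod n) (j : (ZMod n)ˣ) : MulAut (DihedralGroup n) :=
  MonoidHom.toMulEquiv (affineHom i j) (affineHom (-(↑j⁻¹ * i)) ↑j⁻¹)
    (by rw [affineHom_comp, ← affineHom_zero_one]; congr 1 <;> simp)
    (by rw [affineHom_comp, ← affineHom_zero_one]; congr 1 <;> simp [← mul_assoc])

@[simp] lemma affineAut_r (i : ZMod n) (j : (ZMod n)ˣ) (b : ZMod n) :
    affineAut i j (r b) = r ((j : ZMod n) * b) := rfl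

@[simp] lemma affineAut_sr (i : ZMod n) (j : (ZMod n)ˣ) (b : ZMod n) :
    affineAut i j (sr b) = sr (i + (j : ZMod n) * b) := rfl

lemma affineAut_mul (i₁ i₂ : ZMod n) (j₁ j₂ : (ZMod n)ˣ) :
    affineAut i₁ j₁ * affineAut i₂ j₂ = affineAut (i₁ + (j₁ : ZMod n) * i₂) (j₁ * j₂) :=
  MulEquiv.ext fun g => DFunLike.congr_fun (affineHom_comp i₁ j₁ i₂ j₂) g

def affineAutHom : Multiplicative (ZMod n) ⋊[unitsMulAction n] (ZMod n)ˣ →*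
    MulAut (DihedralGroup n) where
  toFun p := affineAut p.left.toAdd p.right
  map_one' := by ext (b | b) <;> simp
  map_mul' p q := by
    rw [affineAut_mul]
    rfl

lemma affineAutHom_injective : Function.Injective (affineAutHom (n := n)) := by
  intro p q hpq
  have hr := r.inj (DFunLike.congr_fun hpq (r 1))
  have hsr := sr.inj (DFunLike.congr_fun hpq (sr 0))
  simp only [mul_one, mul_zero, add_zero] at hr hsr
  exact SemidirectProduct.ext hsr (Units.ext hr)

lemma map_r_of_map_r_one {F : Type*} [FunLike F (DihedralGroup n) (DihedralGroup n)]
    [MonoidHomClass F (DihedralGroup n) (DihedralGroup n)] {f : F} {c : ZMod n}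
    (hc : f (r 1) = r c) (b : ZMod n) : f (r b) = r (c * b) := by
  rw [← ZMod.intCast_zmod_cast b, ← r_one_zpow, map_zpow, hc, r_zpow]

lemma exists_apply_r_one_eq_r (hn : n ≠ 2) (f : MulAut (DihedralGroup n)) :
    ∃ c, f (r 1) = r c := by
  rcases h : f (r 1) with c | c
  · exact ⟨c, rfl⟩
  · have := f.orderOf_eq (r 1)
    rw [h, orderOf_sr, orderOf_r_one] at this
    exact absurd this.symm hn

lemma affineAutHom_surjective (hn : n ≠ 2) : Function.Surjective (affineAutHom (n := n)) := by
  intro f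
  obtain ⟨c, hc⟩ := exists_apply_r_one_eq_r hn f
  obtain ⟨c', hc'⟩ := exists_apply_r_one_eq_r hn f.symm
  have hr := map_r_of_map_r_one hc
  have hcc' : c * c' = 1 := r.inj (by rw [← hr, ← hc', f.apply_symm_apply])
  obtain ⟨d, hd⟩ : ∃ d, f (sr 0) = sr d := by
    rcases h : f (sr 0) with b | b
    · have : f (r (c' * b)) = f (sr 0) := by rw [hr, ← mul_assoc, hcc', one_mul, h]
      exact nomatch f.injective this
    · exact ⟨b, rfl⟩
  refine ⟨⟨.ofAdd d, .mkOfMulEqOne c c' hcc'⟩, MulEquiv.ext ?_⟩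
  rintro (b | b)
  · exact (hr b).symm
  · have hb : sr b = sr 0 * r b := by rw [sr_mul_r, zero_add]
    show sr (d + c * b) = f (sr b)
    rw [hb, map_mul, hd, hr, sr_mul_r]

end DihedralGroup

/-- `Aut(D_n) ≅ (ℤ/nℤ) ⋊ (ℤ/nℤ)ˣ`, via `(i, j) ↦ φ_{i,j}` where
`φ_{i,j}(t^a x^b) = t^a x^{ia + jb}`; here `x^b = r b` and `t x^b = sr b`. -/
theorem autDihedralGroup_iso_semidirect (n : ℕ) (hn : 3 ≤ n) :
    ∃ e : Multiplicative (ZMod n) ⋊[unitsMulAction n] (ZMod n)ˣ ≃* MulAut (DihedralGroup n),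
      ∀ (i : ZMod n) (j : (ZMod n)ˣ) (b : ZMod n),
        e ⟨Multiplicative.ofAdd i, j⟩ (DihedralGroup.r b) =
            DihedralGroup.r ((j : ZMod n) * b) ∧
        e ⟨Multiplicative.ofAdd i, j⟩ (DihedralGroup.sr b) =
            DihedralGroup.sr (i + (j : ZMod n) * b) :=
  ⟨.ofBijective DihedralGroup.affineAutHom ⟨DihedralGroup.affineAutHom_injective,
      DihedralGroup.affineAutHom_surjective (by omega)⟩, fun _ _ _ => ⟨rfl, rfl⟩⟩
end

section
/- Let Z be a finite set of cardinality 2n with n ≥ 1 and let {X, Y} be a splitting of Z (so Y = Z \ X and |X| = |Y| = n). Then the subgroup W(X,Y) of Perm(Z) is self-normalizing: Norm_{Perm(Z)}(W(X,Y)) = W(X,Y). -/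
/-- A subgroup of `Equiv.Perm Z` is regular if it acts transitively and
no non-identity element has a fixed point. -/
def IsRegularSubgroup {Z : Type*} (N : Subgroup (Equiv.Perm Z)) : Prop :=
  (∀ z w : Z, ∃ σ ∈ N, σ z = w) ∧ ∀ σ ∈ N, σ ≠ 1 → ∀ z : Z, σ z ≠ z

/-- The wreath-product subgroup `W(X, Y)` (with `Y = Xᶜ`): all permutations that
either fix both `X` and `Y` setwise, or interchange them. -/
def wprod {Z : Type*} (X : Set Z) : Subgroup (Equiv.Perm Z) where
  carrier := {w | (w '' X = X ∧ w '' Xᶜ = Xᶜ) ∨ (w '' X = Xᶜ ∧ w '' Xᶜ = X)}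
  one_mem' := by simp
  mul_mem' := by
    rintro a b (⟨ha1, ha2⟩ | ⟨ha1, ha2⟩) (⟨hb1, hb2⟩ | ⟨hb1, hb2⟩) <;>
      simp only [Set.mem_setOf_eq, Equiv.Perm.coe_mul, Set.image_comp, hb1, hb2, ha1, ha2] <;>
      tauto
  inv_mem' := by
    intro a h
    have key : ∀ S T : Set Z, a '' S = T → (a⁻¹ : Equiv.Perm Z) '' T = S := by
      intro S T hST
      rw [← hST, Set.image_image]
      simp [Equiv.Perm.inv_def]
    rcases h with ⟨h1, h2⟩ | ⟨h1, h2⟩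
    · exact Or.inl ⟨key _ _ h1, key _ _ h2⟩
    · exact Or.inr ⟨key _ _ h2, key _ _ h1⟩

/-- The image of the left regular representation `λ : G → Perm G`. -/
def leftRegRange (G : Type*) [Group G] : Subgroup (Equiv.Perm G) :=
  (MulAction.toPermHom G G).range

/-- `|Υ_n|`: number of units of exponent 2 mod `n`. -/
noncomputable def upsilonCard (n : ℕ) : ℕ :=
  Nat.card {u : (ZMod n)ˣ // u ^ 2 = 1}

/-!
A permutation lies in `W(X, Y)` exactly when it preserves, in both directions, the relation
"lies on the same side of `{X, Y}`". Let `g` normalize `W(X, Y)` and let `x, y` lie on the same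
side. The transposition `(x y)` lies in `W(X, Y)`, hence so does its conjugate `(g x  g y)`. A
transposition of two points on different sides lies in `W(X, Y)` only if these two points are
all of `Z`; then `Z = {x, y}` lies on one side and `g x`, `g y` cannot be separated after all.
Applying this to `g` and to `g⁻¹` shows that `g ∈ W(X, Y)`.
-/

namespace Equiv.Perm

variable {Z : Type*} {X : Set Z}

theorem image_eq_iff_forall_apply_mem_iff {w : Perm Z} {S : Set Z} :
    w '' X = S ↔ ∀ x, w x ∈ S ↔ x ∈ X := by
  rw [eq_comm, ← Equiv.preimage_eq_iff_eq_image, Set.ext_iff]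
  rfl

theorem mem_wprod_iff {w : Perm Z} :
    w ∈ wprod X ↔ (∀ x, w x ∈ X ↔ x ∈ X) ∨ ∀ x, w x ∈ Xᶜ ↔ x ∈ X := by
  have hcompl : w '' Xᶜ = (w '' X)ᶜ := Set.image_compl_eq w.bijective
  change (w '' X = X ∧ w '' Xᶜ = Xᶜ) ∨ (w '' X = Xᶜ ∧ w '' Xᶜ = X) ↔ _
  rw [hcompl, compl_inj_iff, compl_eq_comm, eq_comm (a := Xᶜ), and_self, and_self,
    image_eq_iff_forall_apply_mem_iff, image_eq_iff_forall_apply_mem_iff]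

theorem mem_wprod_of_forall_iff {w : Perm Z}
    (h : ∀ x y, (w x ∈ X ↔ w y ∈ X) ↔ (x ∈ X ↔ y ∈ X)) : w ∈ wprod X := by
  rw [mem_wprod_iff]
  rcases X.eq_empty_or_nonempty with rfl | ⟨x₀, hx₀⟩
  · exact Or.inl fun x => by simp
  by_cases hw : w x₀ ∈ X
  · exact Or.inl fun x => by simpa [hx₀, hw] using h x x₀
  · exact Or.inr fun x => by simpa [hx₀, hw] using h x x₀

theorem swap_mem_wprod [DecidableEq Z] {a b : Z} (h : a ∈ X ↔ b ∈ X) :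
    swap a b ∈ wprod X := by
  refine mem_wprod_iff.2 (Or.inl fun x => ?_)
  rw [swap_apply_def]
  split_ifs with hxa hxb
  · rw [hxa, h]
  · rw [hxb, h]
  · rfl

theorem eq_or_eq_of_swap_mem_wprod [DecidableEq Z] {a b : Z} (hs : swap a b ∈ wprod X)
    (h : ¬(a ∈ X ↔ b ∈ X)) (z : Z) : z = a ∨ z = b := by
  by_contra! hz
  rcases mem_wprod_iff.1 hs with hs | hs
  · exact h (by simpa using (hs a).symm)
  · simpa [swap_apply_of_ne_of_ne hz.1 hz.2] using hs z

theorem mem_iff_mem_of_mem_normalizer {g : Perm Z}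
    (hg : g ∈ Subgroup.normalizer (wprod X : Set (Perm Z))) {x y : Z} (h : x ∈ X ↔ y ∈ X) :
    g x ∈ X ↔ g y ∈ X := by
  classical
  by_contra hgxy
  have hconj : swap (g x) (g y) ∈ wprod X := by
    rw [swap_apply_apply]
    exact (Subgroup.mem_normalizer_iff.1 hg _).1 (swap_mem_wprod h)
  have hZ (z : Z) : z = x ∨ z = y := by
    simpa using eq_or_eq_of_swap_mem_wprod hconj hgxy (g z)
  apply hgxy
  rcases hZ (g x) with hx | hx <;> rcases hZ (g y) with hy | hy <;>
    simp only [hx, hy, h]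

end Equiv.Perm

open Equiv.Perm in
theorem wprod_self_normalizing_general {Z : Type*} (X : Set Z) :
    Subgroup.normalizer (wprod X : Set (Equiv.Perm Z)) = wprod X := by
  refine le_antisymm (fun g hg => mem_wprod_of_forall_iff fun x y => ⟨fun h => ?_,
    mem_iff_mem_of_mem_normalizer hg⟩) Subgroup.le_normalizer
  simpa using mem_iff_mem_of_mem_normalizer (inv_mem hg) h

/-- For a splitting `{X, Y}` of a set of size `2n`, `W(X,Y)` is self-normalizing. -/
theorem wprod_self_normalizing {Z : Type*} [Fintype Z] (n : ℕ) (hn : 1 ≤ n)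
    (hZ : Fintype.card Z = 2 * n) (X : Set Z) (hX : X.ncard = n) (hXc : Xᶜ.ncard = n) :
    Subgroup.normalizer (wprod X : Set (Equiv.Perm Z)) = wprod X :=
  wprod_self_normalizing_general X
end

section
/- For n ≥ 3, consider the left regular representation λ(D_n) ≤ B = Perm(D_n). The number of subsets X of (the underlying set of) D_n with 1 ∈ X, |X| = n, and λ(D_n) ≤ W(X, X^c) equals 1 if n is odd, and equals 3 if n is even. (Equivalently, λ(D_n) is contained in the wreath-product subgroup W(X,Y) for exactly one splitting {X,Y} when n is odd, and for exactly three splittings when n is even.) -/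
/-!
If `1 ∈ X` and every left translate of `X` is `X` or `Xᶜ`, then `gX = X ↔ g ∈ X`, and
`g ↦ (1 if g ∈ X, -1 otherwise)` is a homomorphism `G →* ℤˣ` with kernel `X`; conversely
every kernel of such a character has this property. Such an `X` has half the size of `G`
exactly when `X ≠ G`, i.e. when the character is nontrivial. A character of `D_n` is
determined by the images `a` of `r 1` and `b` of `sr 0`, subject only to `a ^ n = 1`:
for odd `n` this forces `a = 1`, leaving one nontrivial character, while for even `n`
all three nontrivial pairs occur.
-/

open Pointwise DihedralGroup

section Splitting

variable {G : Type*} [Group G] {X : Set G}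

lemma mem_wprod_iff {Z : Type*} (X : Set Z) (w : Equiv.Perm Z) :
    w ∈ wprod X ↔ w '' X = X ∨ w '' X = Xᶜ := by
  refine ⟨Or.imp And.left And.left, Or.imp (fun h ↦ ⟨h, ?_⟩) (fun h ↦ ⟨h, ?_⟩)⟩
  · rw [Equiv.image_compl, h]
  · rw [Equiv.image_compl, h, compl_compl]

lemma leftRegRange_le_wprod_iff (X : Set G) :
    leftRegRange G ≤ wprod X ↔ ∀ g : G, g • X = X ∨ g • X = Xᶜ := by
  refine ⟨fun h g ↦ (mem_wprod_iff X _).1 (h ⟨g, rfl⟩), ?_⟩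
  rintro h _ ⟨g, rfl⟩
  exact (mem_wprod_iff X _).2 (h g)

lemma smul_eq_self_iff_mem (h1 : (1 : G) ∈ X) (hX : ∀ g : G, g • X = X ∨ g • X = Xᶜ) (g : G) :
    g • X = X ↔ g ∈ X := by
  have hg : g ∈ g • X := by simpa using Set.smul_mem_smul_set (a := g) h1
  refine ⟨fun h ↦ h ▸ hg, fun hgX ↦ (hX g).resolve_right fun h ↦ ?_⟩
  exact (h ▸ hg) hgX

lemma mul_mem_iff (h1 : (1 : G) ∈ X) (hX : ∀ g : G, g • X = X ∨ g • X = Xᶜ) (g h : G) :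
    g * h ∈ X ↔ (g ∈ X ↔ h ∈ X) := by
  have hgh : g * h ∈ g • X ↔ h ∈ X := Set.smul_mem_smul_set_iff
  by_cases hg : g ∈ X
  · rw [(smul_eq_self_iff_mem h1 hX g).2 hg] at hgh
    simpa [hg] using hgh
  · rw [(hX g).resolve_left (mt (smul_eq_self_iff_mem h1 hX g).1 hg), Set.mem_compl_iff] at hgh
    tauto

open scoped Classical in
noncomputable def splittingSign (h1 : (1 : G) ∈ X) (hX : ∀ g : G, g • X = X ∨ g • X = Xᶜ) :
    G →* ℤˣ where
  toFun g := if g ∈ X then 1 else -1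
  map_one' := if_pos h1
  map_mul' g h := by
    by_cases hg : g ∈ X <;> by_cases hh : h ∈ X <;> simp [mul_mem_iff h1 hX, hg, hh]

lemma ker_splittingSign (h1 : (1 : G) ∈ X) (hX : ∀ g : G, g • X = X ∨ g • X = Xᶜ) :
    ((splittingSign h1 hX).ker : Set G) = X := by
  ext g
  by_cases hg : g ∈ X <;> simp [splittingSign, MonoidHom.mem_ker, hg]

lemma smul_ker_eq_or (f : G →* ℤˣ) (g : G) :
    g • (f.ker : Set G) = f.ker ∨ g • (f.ker : Set G) = (f.ker : Set G)ᶜ := by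
  rcases Int.units_eq_one_or (f g) with hg | hg
  · left
    ext x
    simp [hg]
  · right
    ext x
    simp [Set.mem_smul_set_iff_inv_smul_mem, hg, Int.units_ne_iff_eq_neg, neg_eq_iff_eq_neg]

noncomputable def homEquivSplitting :
    (G →* ℤˣ) ≃ {X : Set G // (1 : G) ∈ X ∧ ∀ g : G, g • X = X ∨ g • X = Xᶜ} where
  toFun f := ⟨f.ker, f.ker.one_mem, smul_ker_eq_or f⟩
  invFun X := splittingSign X.2.1 X.2.2
  left_inv f := by
    ext g
    rcases Int.units_eq_one_or (f g) with hg | hg <;> simp [splittingSign, hg]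
  right_inv X := Subtype.ext (ker_splittingSign X.2.1 X.2.2)

lemma two_mul_ncard_eq_card_iff [Finite G] (h1 : (1 : G) ∈ X)
    (hX : ∀ g : G, g • X = X ∨ g • X = Xᶜ) :
    2 * X.ncard = Nat.card G ↔ X ≠ Set.univ := by
  constructor
  · rintro h rfl
    rw [Set.ncard_univ] at h
    have := Nat.card_pos (α := G)
    omega
  · intro hne
    obtain ⟨g, hg⟩ := (Set.ne_univ_iff_exists_notMem X).1 hne
    have hcompl := Set.ncard_add_ncard_compl X
    rw [← (hX g).resolve_left (mt (smul_eq_self_iff_mem h1 hX g).1 hg), Set.ncard_smul_set]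
      at hcompl
    omega

lemma card_splitting_ne_univ :
    Nat.card {X : Set G // ((1 : G) ∈ X ∧ ∀ g : G, g • X = X ∨ g • X = Xᶜ) ∧ X ≠ Set.univ} =
      Nat.card {f : G →* ℤˣ // f ≠ 1} := by
  refine (Nat.card_congr ((homEquivSplitting.subtypeEquiv fun f ↦ ?_).trans
    (Equiv.subtypeSubtypeEquivSubtypeInter _ (· ≠ Set.univ)))).symm
  exact (MonoidHom.ker_eq_top_iff.symm.trans Subgroup.coe_eq_univ.symm).not

lemma one_mem_ncard_eq_leftRegRange_le_iff [Finite G] {n : ℕ} (hG : Nat.card G = 2 * n) :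
    ((1 : G) ∈ X ∧ X.ncard = n ∧ leftRegRange G ≤ wprod X) ↔
      ((1 : G) ∈ X ∧ ∀ g : G, g • X = X ∨ g • X = Xᶜ) ∧ X ≠ Set.univ := by
  rw [leftRegRange_le_wprod_iff]
  refine ⟨fun ⟨h1, hcard, hX⟩ ↦ ⟨⟨h1, hX⟩, ?_⟩, fun ⟨⟨h1, hX⟩, hne⟩ ↦ ⟨h1, ?_, hX⟩⟩
  · exact (two_mul_ncard_eq_card_iff h1 hX).1 (by rw [hcard, hG])
  · have := (two_mul_ncard_eq_card_iff h1 hX).2 hne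
    omega

end Splitting

lemma pow_val_add {M : Type*} [Monoid M] {n : ℕ} [NeZero n] {a : M} (ha : a ^ n = 1)
    (i j : ZMod n) : a ^ (i + j).val = a ^ i.val * a ^ j.val := by
  rw [ZMod.val_add, ← pow_eq_pow_mod _ ha, pow_add]

lemma Int.units_pow_val_sub {n : ℕ} [NeZero n] {a : ℤˣ} (ha : a ^ n = 1) (i j : ZMod n) :
    a ^ (j - i).val = a ^ i.val * a ^ j.val := by
  have h := pow_val_add ha (j - i) i
  rw [sub_add_cancel] at h
  rw [h, mul_left_comm, Int.units_mul_self, mul_one]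

section Dihedral

variable {n : ℕ} [NeZero n]

def dihedralHom (a b : ℤˣ) (ha : a ^ n = 1) : DihedralGroup n →* ℤˣ where
  toFun
    | r i => a ^ i.val
    | sr i => b * a ^ i.val
  map_one' := by
    change a ^ (0 : ZMod n).val = 1
    rw [ZMod.val_zero, pow_zero]
  map_mul' := by
    rintro (i | i) (j | j) <;>
      simp only [r_mul_r, r_mul_sr, sr_mul_r, sr_mul_sr, pow_val_add ha,
        Int.units_pow_val_sub ha]
    · ac_rfl
    · ac_rfl
    · rw [mul_mul_mul_comm, Int.units_mul_self, one_mul]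

lemma MonoidHom.map_dihedral_r {M : Type*} [Monoid M] (f : DihedralGroup n →* M) (i : ZMod n) :
    f (r i) = f (r 1) ^ i.val := by
  rw [← map_pow, r_one_pow, ZMod.natCast_zmod_val]

lemma MonoidHom.map_dihedral_sr {M : Type*} [Monoid M] (f : DihedralGroup n →* M)
    (i : ZMod n) : f (sr i) = f (sr 0) * f (r 1) ^ i.val := by
  rw [← f.map_dihedral_r, ← map_mul, sr_mul_r, zero_add]

def homEquivDihedral : (DihedralGroup n →* ℤˣ) ≃ {p : ℤˣ × ℤˣ // p.1 ^ n = 1} where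
  toFun f := ⟨(f (r 1), f (sr 0)), by rw [← map_pow, r_one_pow_n, map_one]⟩
  invFun p := dihedralHom p.1.1 p.1.2 p.2
  left_inv f := by
    refine MonoidHom.ext fun g ↦ ?_
    rcases g with i | i
    · exact (f.map_dihedral_r i).symm
    · exact (f.map_dihedral_sr i).symm
  right_inv p := by
    have h1 : p.1.1 ^ (1 : ZMod n).val = p.1.1 := by
      rw [ZMod.val_one_eq_one_mod, ← pow_eq_pow_mod _ p.2, pow_one]
    ext <;> simp [dihedralHom, h1]

end Dihedral

lemma card_units_int_pair_ne_one (n : ℕ) :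
    Nat.card {p : ℤˣ × ℤˣ // p.1 ^ n = 1 ∧ p ≠ 1} = if Odd n then 1 else 3 := by
  rw [Nat.card_eq_fintype_card]
  rcases Nat.even_or_odd n with hn | hn
  · simp only [Int.units_pow_eq_pow_mod_two _ n, Nat.even_iff.1 hn, Nat.not_odd_iff_even.2 hn]
    decide
  · simp only [Int.units_pow_eq_pow_mod_two _ n, Nat.odd_iff.1 hn, hn]
    decide

lemma card_dihedralHom_ne_one (n : ℕ) [NeZero n] :
    Nat.card {f : DihedralGroup n →* ℤˣ // f ≠ 1} = if Odd n then 1 else 3 := by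
  rw [← card_units_int_pair_ne_one]
  refine Nat.card_congr ((homEquivDihedral.subtypeEquiv fun f ↦ ?_).trans
    (Equiv.subtypeSubtypeEquivSubtypeInter _ (· ≠ 1)))
  exact homEquivDihedral.injective.ne_iff.symm.trans Subtype.ext_iff.not

/-- `λ(D_n)` lies in `W(X, Xᶜ)` for exactly one splitting with `1 ∈ X` when `n` is odd,
and for exactly three such splittings when `n` is even. -/
theorem count_splittings_for_lambda (n : ℕ) (hn : 3 ≤ n) :
    Nat.card {X : Set (DihedralGroup n) // (1 : DihedralGroup n) ∈ X ∧ X.ncard = n ∧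
        leftRegRange (DihedralGroup n) ≤ wprod X} = if Odd n then 1 else 3 := by
  have : NeZero n := ⟨by omega⟩
  calc _ = Nat.card {X : Set (DihedralGroup n) // ((1 : DihedralGroup n) ∈ X ∧
          ∀ g : DihedralGroup n, g • X = X ∨ g • X = Xᶜ) ∧ X ≠ Set.univ} :=
        Nat.card_congr (Equiv.subtypeEquivRight fun _ ↦
          one_mem_ncard_eq_leftRegRange_le_iff DihedralGroup.nat_card)
    _ = Nat.card {f : DihedralGroup n →* ℤˣ // f ≠ 1} := card_splitting_ne_univ
    _ = if Odd n then 1 else 3 := card_dihedralHom_ne_one n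
end

section
/- Let G be a finite group, B = Perm(G), λ : G → B the left regular representation, and Hol(G) = Norm_B(λ(G)). Define ℋ(G) = { N ≤ Hol(G) : N is regular, N ≅ G, and Norm_B(N) = Hol(G) }. Then ℋ(G) = { τ λ(G) τ^{-1} : τ ∈ Norm_B(Hol(G)) }, and this conjugation action induces a bijection between ℋ(G) and the quotient T(G) = Norm_B(Hol(G)) / Hol(G); in particular, the cardinality of ℋ(G) equals the index [Norm_B(Hol(G)) : Hol(G)]. -/
/-- The holomorph `Hol(G) = Norm_B(λ(G))` inside `B = Perm G`. -/
def holSubgroup (G : Type*) [Group G] : Subgroup (Equiv.Perm G) :=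
  Subgroup.normalizer (leftRegRange G : Set (Equiv.Perm G))

/-- `ℋ(G)`: regular subgroups of `Hol(G)` isomorphic to `G` whose normalizer is `Hol(G)`. -/
def multHolClass (G : Type*) [Group G] : Set (Subgroup (Equiv.Perm G)) :=
  {N | N ≤ holSubgroup G ∧ IsRegularSubgroup N ∧ Nonempty (N ≃* G) ∧
    Subgroup.normalizer (N : Set (Equiv.Perm G)) = holSubgroup G}

/-!
A regular subgroup `N` with an isomorphism `e : G ≃* N` is the conjugate `τ λ(G) τ⁻¹` by the
bijection `τ g = e g 1`, and conjugation by `τ` carries `Hol(G) = Norm(λ(G))` onto `Norm(N)`;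
hence `N ∈ ℋ(G)` exactly when `τ` normalizes `Hol(G)`. Two conjugates `τ λ(G) τ⁻¹` and
`σ λ(G) σ⁻¹` coincide iff `τ⁻¹ σ` normalizes `λ(G)`, i.e. lies in `Hol(G)`, which identifies
`ℋ(G)` with the cosets of `Hol(G)` in its normalizer.
-/

open Equiv Subgroup

namespace Subgroup

variable {G : Type*} [Group G]

open scoped Pointwise in
theorem map_conj_eq_map_conj_iff (H : Subgroup G) (a b : G) :
    H.map (MulAut.conj a).toMonoidHom = H.map (MulAut.conj b).toMonoidHom ↔
      a⁻¹ * b ∈ normalizer (H : Set G) := by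
  change MulAut.conj a • H = MulAut.conj b • H ↔ _
  rw [mem_normalizer_iff_map_conj_eq, eq_comm, ← inv_smul_eq_iff, smul_smul, ← map_inv, ← map_mul]
  rfl

noncomputable def quotientEquivConjugates (K L : Subgroup G) :
    K ⧸ (normalizer (L : Set G)).subgroupOf K ≃
      Set.range fun τ : K => L.map (MulAut.conj (τ : G)).toMonoidHom :=
  (Quotient.congrRight fun a b => by
      rw [QuotientGroup.leftRel_apply, mem_subgroupOf, coe_mul, coe_inv,
        ← map_conj_eq_map_conj_iff]
      rfl).trans
    (Setoid.quotientKerEquivRange _)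

end Subgroup

theorem IsRegularSubgroup.map_conj {Z : Type*} {N : Subgroup (Perm Z)} (hN : IsRegularSubgroup N)
    (τ : Perm Z) : IsRegularSubgroup (N.map (MulAut.conj τ).toMonoidHom) := by
  obtain ⟨htrans, hfree⟩ := hN
  refine ⟨fun z w => ?_, ?_⟩
  · obtain ⟨σ, hσ, hσzw⟩ := htrans (τ.symm z) (τ.symm w)
    exact ⟨τ * σ * τ⁻¹, ⟨σ, hσ, rfl⟩, by simp [hσzw]⟩
  · rintro _ ⟨σ, hσ, rfl⟩ hne z hz
    have hσ1 : σ ≠ 1 := by rintro rfl; simp at hne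
    exact hfree σ hσ hσ1 (τ.symm z) (τ.eq_symm_apply.mpr (by simpa using hz))

section LeftRegular

variable {G : Type*} [Group G]

theorem isRegularSubgroup_leftRegRange : IsRegularSubgroup (leftRegRange G) := by
  refine ⟨fun z w => ⟨MulAction.toPerm (w * z⁻¹), ⟨_, rfl⟩, by simp⟩, ?_⟩
  rintro _ ⟨g, rfl⟩ hne z hz
  obtain rfl : g = 1 := by simpa using hz
  exact hne (map_one _)

noncomputable def leftRegRangeEquiv : G ≃* leftRegRange G :=
  MonoidHom.ofInjective (f := MulAction.toPermHom G G) MulAction.toPerm_injective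

theorem IsRegularSubgroup.exists_map_conj_leftRegRange_eq {N : Subgroup (Perm G)}
    (hN : IsRegularSubgroup N) (e : G ≃* N) :
    ∃ τ : Perm G, (leftRegRange G).map (MulAut.conj τ).toMonoidHom = N := by
  obtain ⟨htrans, hfree⟩ := hN
  have hbij : Function.Bijective fun g : G => (e g : Perm G) 1 := by
    refine ⟨fun g g' h => ?_, fun w => ?_⟩
    · have h : (e g : Perm G) 1 = (e g' : Perm G) 1 := h
      have hfix : (e (g⁻¹ * g') : Perm G) 1 = 1 := by simp [← h]
      have hone : e (g⁻¹ * g') = 1 :=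
        Subtype.ext (not_not.mp fun hne => hfree _ (e _).2 hne 1 hfix)
      exact inv_mul_eq_one.mp (e.map_eq_one_iff.mp hone)
    · obtain ⟨σ, hσ, hσw⟩ := htrans 1 w
      exact ⟨e.symm ⟨σ, hσ⟩, by simp [hσw]⟩
  set τ := Equiv.ofBijective _ hbij
  refine ⟨τ, ?_⟩
  have hconj : (MulAut.conj τ).toMonoidHom.comp (MulAction.toPermHom G G) =
      N.subtype.comp e.toMonoidHom := by
    ext g x
    obtain ⟨y, rfl⟩ := τ.surjective x
    simp [τ]
  rw [leftRegRange, MonoidHom.map_range, hconj, MonoidHom.range_comp,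
    (MonoidHom.range_eq_top (f := e.toMonoidHom)).mpr e.surjective, ← MonoidHom.range_eq_map,
    range_subtype]

theorem mem_multHolClass_iff {N : Subgroup (Perm G)} :
    N ∈ multHolClass G ↔ ∃ τ ∈ normalizer (holSubgroup G : Set (Perm G)),
      N = (leftRegRange G).map (MulAut.conj τ).toMonoidHom := by
  have normalizer_conj (τ : Perm G) :
      normalizer ((leftRegRange G).map (MulAut.conj τ).toMonoidHom : Set (Perm G)) =
        (holSubgroup G).map (MulAut.conj τ).toMonoidHom :=
    (map_equiv_normalizer_eq _ _).symm
  constructor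
  · rintro ⟨-, hreg, ⟨e⟩, hnorm⟩
    obtain ⟨τ, rfl⟩ := hreg.exists_map_conj_leftRegRange_eq e.symm
    refine ⟨τ, ?_, rfl⟩
    rw [mem_normalizer_iff_map_conj_eq]
    exact (normalizer_conj τ).symm.trans hnorm
  · rintro ⟨τ, hτ, rfl⟩
    have hnorm := (normalizer_conj τ).trans (mem_normalizer_iff_map_conj_eq.mp hτ)
    exact ⟨hnorm ▸ le_normalizer, isRegularSubgroup_leftRegRange.map_conj τ,
      ⟨(MulEquiv.subgroupMap (MulAut.conj τ) _).symm.trans leftRegRangeEquiv.symm⟩, hnorm⟩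

end LeftRegular

theorem multiple_holomorph_parametrization_general (G : Type*) [Group G] :
    multHolClass G =
      {N : Subgroup (Equiv.Perm G) | ∃ τ ∈ (Subgroup.normalizer (holSubgroup G : Set (Equiv.Perm G))),
        N = Subgroup.map (MulAut.conj τ).toMonoidHom (leftRegRange G)} ∧
    (∃ f : ((Subgroup.normalizer (holSubgroup G : Set (Equiv.Perm G))) ⧸
          ((holSubgroup G).subgroupOf (Subgroup.normalizer (holSubgroup G : Set (Equiv.Perm G))))) ≃ multHolClass G,
      ∀ τ : (Subgroup.normalizer (holSubgroup G : Set (Equiv.Perm G))),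
        (f (QuotientGroup.mk τ) : Subgroup (Equiv.Perm G)) =
          Subgroup.map (MulAut.conj (τ : Equiv.Perm G)).toMonoidHom (leftRegRange G)) ∧
    Nat.card (multHolClass G) =
      (holSubgroup G).relIndex (Subgroup.normalizer (holSubgroup G : Set (Equiv.Perm G))) := by
  have hset : multHolClass G = {N | ∃ τ ∈ normalizer (holSubgroup G : Set (Perm G)),
      N = (leftRegRange G).map (MulAut.conj τ).toMonoidHom} :=
    Set.ext fun _ => mem_multHolClass_iff
  have hrange : Set.range (fun τ : normalizer (holSubgroup G : Set (Perm G)) =>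
      (leftRegRange G).map (MulAut.conj (τ : Perm G)).toMonoidHom) = multHolClass G := by
    rw [hset]
    ext N
    simp [eq_comm]
  let f := (quotientEquivConjugates _ (leftRegRange G)).trans (Equiv.setCongr hrange)
  exact ⟨hset, ⟨f, fun _ => rfl⟩, (Nat.card_congr f).symm⟩

/-- `ℋ(G) = {τ λ(G) τ⁻¹ : τ ∈ Norm_B(Hol(G))}`, and conjugation induces a bijection
between `T(G) = Norm_B(Hol(G))/Hol(G)` and `ℋ(G)`; in particular
`|ℋ(G)| = [Norm_B(Hol(G)) : Hol(G)]`. -/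
theorem multiple_holomorph_parametrization (G : Type*) [Group G] [Finite G] :
    multHolClass G =
      {N : Subgroup (Equiv.Perm G) | ∃ τ ∈ (Subgroup.normalizer (holSubgroup G : Set (Equiv.Perm G))),
        N = Subgroup.map (MulAut.conj τ).toMonoidHom (leftRegRange G)} ∧
    (∃ f : ((Subgroup.normalizer (holSubgroup G : Set (Equiv.Perm G))) ⧸
          ((holSubgroup G).subgroupOf (Subgroup.normalizer (holSubgroup G : Set (Equiv.Perm G))))) ≃ multHolClass G,
      ∀ τ : (Subgroup.normalizer (holSubgroup G : Set (Equiv.Perm G))),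
        (f (QuotientGroup.mk τ) : Subgroup (Equiv.Perm G)) =
          Subgroup.map (MulAut.conj (τ : Equiv.Perm G)).toMonoidHom (leftRegRange G)) ∧
    Nat.card (multHolClass G) =
      (holSubgroup G).relIndex (Subgroup.normalizer (holSubgroup G : Set (Equiv.Perm G))) :=
  multiple_holomorph_parametrization_general G
end

section
/- Let n be an even positive integer and let v ∈ Υ_n (i.e., v is a unit modulo n with v² = 1), represented by its least nonnegative residue. If gcd(v + 1, n) = 2, then: (a) if 8 does not divide n, v = 1; (b) if 8 divides n, v = 1 or v = n/2 + 1. -/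
/-!
Write `w` for the least residue of `v`. From `w² ≡ 1 (mod n)` we get `(w + 1) w ≡ (w + 1) · 1`,
and cancelling `w + 1` costs exactly the factor `gcd(w + 1, n) = 2` of the modulus, so
`w ≡ 1 (mod n/2)`; as `0 < w < n` this leaves `w = 1` or `w = n/2 + 1`. In the second case
`gcd(n/2 + 2, n) = 2`, which forces `8 ∣ n`: if `n/2 ≡ 2 (mod 4)` then `4` divides both.
-/

theorem ZMod.val_sq_modEq_one {n : ℕ} [NeZero n] {u : ZMod n} (hu : u ^ 2 = 1) :
    u.val ^ 2 ≡ 1 [MOD n] := by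
  rw [← ZMod.natCast_eq_natCast_iff]
  push_cast
  rw [ZMod.natCast_zmod_val, hu]

theorem Nat.modEq_one_of_sq_modEq_one {n w : ℕ} (hn : 0 < n) (h : w ^ 2 ≡ 1 [MOD n]) :
    w ≡ 1 [MOD n / Nat.gcd n (w + 1)] := by
  have hmul : (w + 1) * w ≡ (w + 1) * 1 [MOD n] := by
    have := h.add_right w
    rwa [show w ^ 2 + w = (w + 1) * w by ring, show 1 + w = (w + 1) * 1 by ring] at this
  exact Nat.ModEq.cancel_left_div_gcd hn hmul

theorem Nat.eq_one_or_eq_div_two_add_one_of_modEq {n w : ℕ} (hw : w < n) (hw1 : 1 ≤ w)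
    (h : w ≡ 1 [MOD n / 2]) : w = 1 ∨ w = n / 2 + 1 := by
  obtain ⟨c, hc⟩ := (Nat.modEq_iff_dvd' hw1).1 h.symm
  have hc2 : c < 2 := by
    by_contra! hc2
    have := Nat.mul_le_mul_left (n / 2) hc2
    omega
  interval_cases c <;> omega

theorem Nat.eight_dvd_of_gcd_div_two_add_two_eq_two {n : ℕ} (h : Nat.gcd (n / 2 + 2) n = 2) :
    8 ∣ n := by
  have h2 := Nat.gcd_dvd_left (n / 2 + 2) n
  have h2n := Nat.gcd_dvd_right (n / 2 + 2) n
  rw [h] at h2 h2n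
  by_contra h8
  have h4 : 4 ∣ Nat.gcd (n / 2 + 2) n := Nat.dvd_gcd (by omega) (by omega)
  omega

theorem upsilon_gcd_lemma_general (n : ℕ) (hpos : 0 < n) (v : (ZMod n)ˣ)
    (hv : v ^ 2 = 1) (hgcd : Nat.gcd ((v : ZMod n).val + 1) n = 2) :
    (¬ 8 ∣ n → (v : ZMod n).val = 1) ∧
    (8 ∣ n → (v : ZMod n).val = 1 ∨ (v : ZMod n).val = n / 2 + 1) := by
  have : NeZero n := ⟨hpos.ne'⟩
  set w := (v : ZMod n).val
  have hw1 : 1 ≤ w := by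
    have : 2 ∣ w + 1 := hgcd ▸ Nat.gcd_dvd_left _ _
    omega
  have hsq : w ^ 2 ≡ 1 [MOD n] :=
    ZMod.val_sq_modEq_one (by rw [← Units.val_pow_eq_pow_val, hv, Units.val_one])
  have hmod : w ≡ 1 [MOD n / 2] := by
    simpa only [Nat.gcd_comm n, hgcd] using Nat.modEq_one_of_sq_modEq_one hpos hsq
  have hw := Nat.eq_one_or_eq_div_two_add_one_of_modEq (ZMod.val_lt _) hw1 hmod
  refine ⟨fun h8 => hw.resolve_right fun hhalf => h8 ?_, fun _ => hw⟩
  rw [show w = n / 2 + 1 from hhalf, add_assoc] at hgcd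
  exact Nat.eight_dvd_of_gcd_div_two_add_two_eq_two hgcd

/-- For `n` even and `v ∈ Υ_n` with `gcd(v + 1, n) = 2`: if `8 ∤ n` then `v = 1`,
and if `8 ∣ n` then `v = 1` or `v = n/2 + 1`. -/
theorem upsilon_gcd_lemma (n : ℕ) (hpos : 0 < n) (heven : 2 ∣ n) (v : (ZMod n)ˣ)
    (hv : v ^ 2 = 1) (hgcd : Nat.gcd ((v : ZMod n).val + 1) n = 2) :
    (¬ 8 ∣ n → (v : ZMod n).val = 1) ∧
    (8 ∣ n → (v : ZMod n).val = 1 ∨ (v : ZMod n).val = n / 2 + 1) :=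
  upsilon_gcd_lemma_general n hpos v hv hgcd
end
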